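/- arXiv:2310.00959 — 4 statements merged into one kernel-verified Lean document; each statement's English description precedes it below -/
import Mathlib

section
/- Let 1 < p < ∞, 0 ≤ γ < α < 1, L > 0, and let m ∈ ℕ satisfy 3 + α ≤ 2^{pm+1}(α - γ). Suppose a sequence of positive real numbers (ℓ_i)_{i≥0} satisfies ℓ_0 = (1-α)L^p and (1/2)·(1-α)L^p/2^{pmi} ≤ ℓ_i ≤ (1-α)L^p/2^{pmi} for all i ≥ 1. Then for each i ≥ 1, 2L^p/2^{pmi} - ℓ_i ≤ (1-γ)L^p/2^{pm(i-1)} - ℓ_{i-1}. -/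
/-- Key geometric estimate for the parabolic Calderón–Zygmund subdivision:
if `3 + α ≤ 2^{pm+1}(α - γ)`, `ℓ₀ = (1-α)L^p` and
`(1/2)(1-α)L^p/2^{pmi} ≤ ℓᵢ ≤ (1-α)L^p/2^{pmi}` for `i ≥ 1`, then for each `i ≥ 1`,
`2L^p/2^{pmi} - ℓᵢ ≤ (1-γ)L^p/2^{pm(i-1)} - ℓ_{i-1}`. -/
theorem subdivision_time_length_estimate (p γ α L : ℝ) (hp : 1 < p) (hγ0 : 0 ≤ γ)
    (hγα : γ < α) (hα : α < 1) (hL : 0 < L) (m : ℕ)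
    (hm : 3 + α ≤ (2 : ℝ) ^ (p * (m : ℝ) + 1) * (α - γ))
    (ℓ : ℕ → ℝ) (h0 : ℓ 0 = (1 - α) * L ^ p)
    (hb : ∀ i : ℕ, 1 ≤ i →
      (1 / 2) * ((1 - α) * L ^ p / (2 : ℝ) ^ (p * (m : ℝ) * (i : ℝ))) ≤ ℓ i ∧
      ℓ i ≤ (1 - α) * L ^ p / (2 : ℝ) ^ (p * (m : ℝ) * (i : ℝ))) :
    ∀ i : ℕ, 1 ≤ i →
      2 * L ^ p / (2 : ℝ) ^ (p * (m : ℝ) * (i : ℝ)) - ℓ i ≤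
      (1 - γ) * L ^ p / (2 : ℝ) ^ (p * (m : ℝ) * ((i : ℝ) - 1)) - ℓ (i - 1) := by
  intro i hi
  have hc : (0:ℝ) < L ^ p := Real.rpow_pos_of_pos hL p
  have hB : (0:ℝ) < (2 : ℝ) ^ (p * (m : ℝ) * ((i : ℝ) - 1)) :=
    Real.rpow_pos_of_pos two_pos _
  have hK : (0:ℝ) < (2 : ℝ) ^ (p * (m : ℝ)) := Real.rpow_pos_of_pos two_pos _
  have hA : (2 : ℝ) ^ (p * (m : ℝ) * (i : ℝ))
      = (2 : ℝ) ^ (p * (m : ℝ) * ((i : ℝ) - 1)) * (2 : ℝ) ^ (p * (m : ℝ)) := by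
    rw [← Real.rpow_add two_pos]; ring_nf
  have hm' : 3 + α ≤ 2 * (2 : ℝ) ^ (p * (m : ℝ)) * (α - γ) := by
    have h2 : (2 : ℝ) ^ (p * (m : ℝ) + 1) = (2 : ℝ) ^ (p * (m : ℝ)) * 2 := by
      rw [Real.rpow_add two_pos, Real.rpow_one]
    rw [h2] at hm; linarith
  set B := (2 : ℝ) ^ (p * (m : ℝ) * ((i : ℝ) - 1)) with hBdef
  set K := (2 : ℝ) ^ (p * (m : ℝ)) with hKdef
  have hprev : ℓ (i - 1) ≤ (1 - α) * L ^ p / B := by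
    rcases eq_or_lt_of_le hi with h1 | h2
    · have hi1 : i = 1 := h1.symm
      subst hi1
      have he : p * (m : ℝ) * (((1:ℕ) : ℝ) - 1) = 0 := by norm_num
      simp only [hBdef, he, Real.rpow_zero]
      simp [h0]
    · have h2' : 1 ≤ i - 1 := by omega
      have hcast : ((i - 1 : ℕ) : ℝ) = (i : ℝ) - 1 := by
        push_cast [Nat.cast_sub hi]; ring
      have := (hb (i - 1) h2').2
      rwa [hcast] at this
  have hℓi := (hb i hi).1
  rw [hA] at hℓi ⊢
  have hD : (0:ℝ) < B * K := mul_pos hB hK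
  have key : ((3 + α) / 2) * L ^ p / (B * K) ≤ (α - γ) * L ^ p / B := by
    rw [div_le_div_iff₀ hD hB]
    nlinarith [mul_le_mul_of_nonneg_right hm' (le_of_lt (mul_pos hc hB)), hK.le, hc.le, hB.le]
  have e1 : 2 * L ^ p / (B * K) - (1 / 2) * ((1 - α) * L ^ p / (B * K))
      = ((3 + α) / 2) * L ^ p / (B * K) := by
    field_simp; ring
  have e2 : (1 - γ) * L ^ p / B - (1 - α) * L ^ p / B = (α - γ) * L ^ p / B := by
    field_simp; ring
  linarith
end

section
/- Let Ω_T ⊂ ℝ^{n+1} be a space-time cylinder with 0 < |Ω_T| < ∞, 0 ≤ γ < 1, 0 < r < ∞, and f ∈ L^r_loc(Ω_T). Then lim_{q→∞} ||f||_{PJN^+_{q,γ,r}(Ω_T)} = ||f||_{PBMO^+_{γ,r}(Ω_T)} (in [0, ∞]). -/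
open MeasureTheory ENNReal Set Filter

noncomputable section

/-- A parabolic rectangle in `ℝⁿ × ℝ`, determined by its center `(x, t)` and
edge length `L > 0`. -/
structure ParRect (n : ℕ) where
  x : Fin n → ℝ
  t : ℝ
  L : ℝ
  hL : 0 < L

variable {n : ℕ}

/-- The spatial cube `Q(x, L)`. -/
def ParRect.base (R : ParRect n) : Set (Fin n → ℝ) :=
  {y | ∀ i, |y i - R.x i| ≤ R.L}

/-- The parabolic rectangle `R = Q(x,L) × (t - L^p, t + L^p)`. -/
def ParRect.rect (p : ℝ) (R : ParRect n) : Set ((Fin n → ℝ) × ℝ) :=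
  R.base ×ˢ Ioo (R.t - R.L ^ p) (R.t + R.L ^ p)

/-- The upper part `R⁺(γ) = Q(x,L) × (t + γL^p, t + L^p)`. -/
def ParRect.upper (p γ : ℝ) (R : ParRect n) : Set ((Fin n → ℝ) × ℝ) :=
  R.base ×ˢ Ioo (R.t + γ * R.L ^ p) (R.t + R.L ^ p)

/-- The lower part `R⁻(γ) = Q(x,L) × (t - L^p, t - γL^p)`. -/
def ParRect.lower (p γ : ℝ) (R : ParRect n) : Set ((Fin n → ℝ) × ℝ) :=
  R.base ×ˢ Ioo (R.t - R.L ^ p) (R.t - γ * R.L ^ p)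

/-- Positive part of a real number. -/
def posPart' (x : ℝ) : ℝ := max x 0

/-- The parabolic `r`-oscillation
`inf_c ( ⨍_{R⁺(γ)} (f-c)₊^r + ⨍_{R⁻(γ)} (f-c)₋^r )` of `f` on `R`. -/
def osc (p γ r : ℝ) (f : (Fin n → ℝ) × ℝ → ℝ) (R : ParRect n) : ℝ≥0∞ :=
  ⨅ c : ℝ,
    ((∫⁻ z in R.upper p γ, ENNReal.ofReal (posPart' (f z - c) ^ r)) / volume (R.upper p γ) +
     (∫⁻ z in R.lower p γ, ENNReal.ofReal (posPart' (c - f z) ^ r)) / volume (R.lower p γ))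

/-- The `q`-th power of the parabolic John–Nirenberg norm `‖f‖_{PJN⁺_{q,γ,r}(Ω)}^q`:
the supremum over countable pairwise disjoint collections of parabolic subrectangles of `Ω` of
`Σᵢ |Rᵢ⁺(γ)| · osc(f, Rᵢ)^{q/r}`. -/
def pjnQ (p q γ r : ℝ) (f : (Fin n → ℝ) × ℝ → ℝ) (Ω : Set ((Fin n → ℝ) × ℝ)) : ℝ≥0∞ :=
  ⨆ (Rs : ℕ → ParRect n) (_ : ∀ i, (Rs i).rect p ⊆ Ω)
    (_ : Pairwise fun i j => Disjoint ((Rs i).rect p) ((Rs j).rect p)),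
    ∑' i, volume ((Rs i).upper p γ) * osc p γ r f (Rs i) ^ (q / r)

/-- The parabolic John–Nirenberg norm `‖f‖_{PJN⁺_{q,γ,r}(Ω)}`. -/
def pjn (p q γ r : ℝ) (f : (Fin n → ℝ) × ℝ → ℝ) (Ω : Set ((Fin n → ℝ) × ℝ)) : ℝ≥0∞ :=
  pjnQ p q γ r f Ω ^ (1 / q)

/-- The parabolic BMO norm `‖f‖_{PBMO⁺_{γ,r}(Ω)}`. -/
def pbmo (p γ r : ℝ) (f : (Fin n → ℝ) × ℝ → ℝ) (Ω : Set ((Fin n → ℝ) × ℝ)) : ℝ≥0∞ :=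
  ⨆ (R : ParRect n) (_ : R.rect p ⊆ Ω), osc p γ r f R ^ (1 / r)

/-!
Upper parts of disjoint rectangles in `Ω_T` have total measure at most `|Ω_T|`, so
`‖f‖_{PJN_q} ≤ |Ω_T|^{1/q} ‖f‖_{PBMO} → ‖f‖_{PBMO}`. Conversely, a rectangle `S` strictly inside a
rectangle `R ⊆ Ω_T` with the same center leaves room above it for countably many disjoint
rectangles, so `‖f‖_{PJN_q} ≥ |S⁺|^{1/q} osc(f, S)^{1/r} → osc(f, S)^{1/r}`. It remains to see that
`osc(f, R) ≤ sup osc(f, S)` as `S` increases to `R`: take near-optimal constants `c_S`, extract a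
subsequence converging in the compact space `[-∞, ∞]`, and apply Fatou's lemma; a limit `±∞` would
make one of the two averages over `R` infinite.
-/

open Topology

lemma ENNReal.le_liminf_add {ι : Type*} {l : Filter ι} {u v : ι → ℝ≥0∞} :
    liminf u l + liminf v l ≤ liminf (u + v) l := by
  rcases eq_or_ne (liminf u l) 0 with hu | hu
  · rw [hu, zero_add]
    exact liminf_le_liminf (Eventually.of_forall fun j => le_add_self)
  rcases eq_or_ne (liminf v l) 0 with hv | hv
  · rw [hv, add_zero]
    exact liminf_le_liminf (Eventually.of_forall fun j => le_self_add)
  refine le_of_forall_lt fun d hd => ?_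
  obtain ⟨a, ha, b, hb, hab⟩ := exists_lt_add_of_lt_add hd hu hv
  refine hab.trans_le (le_liminf_of_le (by isBoundedDefault) ?_)
  filter_upwards [eventually_lt_of_lt_liminf ha, eventually_lt_of_lt_liminf hb] with j h₁ h₂
  exact (ENNReal.add_lt_add h₁ h₂).le

theorem setLIntegral_le_liminf_setLIntegral {α ι : Type*} [MeasurableSpace α] {μ : Measure α}
    {l : Filter ι} [l.NeBot] [l.IsCountablyGenerated] {E : Set α} {A : ι → Set α} {g : ι → α → ℝ≥0∞}
    {H : α → ℝ≥0∞} (hA : ∀ j, MeasurableSet (A j)) (hg : ∀ j, Measurable (g j))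
    (hlim : ∀ᵐ z ∂μ.restrict E,
      (∀ᶠ j in l, z ∈ A j) ∧ Tendsto (fun j => g j z) l (𝓝 (H z))) :
    ∫⁻ z in E, H z ∂μ ≤ liminf (fun j => ∫⁻ z in A j, g j z ∂μ) l := by
  have hH : ∀ᵐ z ∂μ.restrict E, H z = liminf (fun j => (A j).indicator (g j) z) l := by
    filter_upwards [hlim] with z ⟨hmem, hz⟩
    refine (hz.congr' ?_).liminf_eq.symm
    filter_upwards [hmem] with j hj using (indicator_of_mem hj _).symm
  calc ∫⁻ z in E, H z ∂μ
      = ∫⁻ z in E, liminf (fun j => (A j).indicator (g j) z) l ∂μ := lintegral_congr_ae hH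
    _ ≤ liminf (fun j => ∫⁻ z in E, (A j).indicator (g j) z ∂μ) l :=
      lintegral_liminf_le fun j => (hg j).indicator (hA j)
    _ ≤ liminf (fun j => ∫⁻ z, (A j).indicator (g j) z ∂μ) l :=
      liminf_le_liminf (Eventually.of_forall fun j => setLIntegral_le_lintegral _ _)
    _ = liminf (fun j => ∫⁻ z in A j, g j z ∂μ) l := by
      simp only [lintegral_indicator (hA _)]

theorem setLAverage_le_liminf_setLAverage {α ι : Type*} [MeasurableSpace α] {μ : Measure α}
    {l : Filter ι} [l.NeBot] [l.IsCountablyGenerated] {E : Set α} {A : ι → Set α}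
    {g : ι → α → ℝ≥0∞} {H : α → ℝ≥0∞} (hE : μ E ≠ 0) (hAE : ∀ j, μ (A j) ≤ μ E)
    (hA : ∀ j, MeasurableSet (A j)) (hg : ∀ j, Measurable (g j))
    (hlim : ∀ᵐ z ∂μ.restrict E,
      (∀ᶠ j in l, z ∈ A j) ∧ Tendsto (fun j => g j z) l (𝓝 (H z))) :
    ⨍⁻ z in E, H z ∂μ ≤ liminf (fun j => ⨍⁻ z in A j, g j z ∂μ) l := by
  simp only [setLAverage_eq, ENNReal.div_eq_inv_mul]
  calc (μ E)⁻¹ * ∫⁻ z in E, H z ∂μ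
      ≤ (μ E)⁻¹ * liminf (fun j => ∫⁻ z in A j, g j z ∂μ) l := by
        gcongr; exact setLIntegral_le_liminf_setLIntegral hA hg hlim
    _ = liminf (fun j => (μ E)⁻¹ * ∫⁻ z in A j, g j z ∂μ) l :=
      (liminf_const_mul_of_ne_top (inv_ne_top.2 hE)).symm
    _ ≤ liminf (fun j => (μ (A j))⁻¹ * ∫⁻ z in A j, g j z ∂μ) l :=
      liminf_le_liminf (Eventually.of_forall fun j =>
        mul_le_mul_left (ENNReal.inv_le_inv.2 (hAE j)) _)

lemma ENNReal.tendsto_rpow_one_div_atTop {v : ℝ≥0∞} (h0 : v ≠ 0) (htop : v ≠ ⊤) :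
    Tendsto (fun q : ℝ => v ^ (1 / q)) atTop (𝓝 1) := by
  have hv : 0 < v.toReal := toReal_pos h0 htop
  have hq : Tendsto (fun q : ℝ => 1 / q) atTop (𝓝 0) := by
    simpa only [one_div] using tendsto_inv_atTop_zero
  have h := ENNReal.tendsto_ofReal <| (Real.continuousAt_const_rpow hv.ne').tendsto.comp hq
  rw [Function.comp_def, Real.rpow_zero, ENNReal.ofReal_one] at h
  refine h.congr fun q => ?_
  rw [← ENNReal.ofReal_rpow_of_pos hv, ENNReal.ofReal_toReal htop]

lemma EReal.continuous_coe_sub (x : ℝ) : Continuous fun c : EReal => (x : EReal) - c := by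
  refine continuous_iff_continuousAt.2 fun c => ?_
  exact ContinuousAt.comp (g := fun q : EReal × EReal => q.1 + q.2)
    (f := fun c => ((x : EReal), -c))
    (EReal.continuousAt_add (Or.inl (EReal.coe_ne_top x)) (Or.inl (EReal.coe_ne_bot x)))
    (continuous_const.prodMk continuous_neg).continuousAt

lemma EReal.continuous_sub_coe (x : ℝ) : Continuous fun c : EReal => c - x := by
  refine continuous_iff_continuousAt.2 fun c => ?_
  exact ContinuousAt.comp (g := fun q : EReal × EReal => q.1 + q.2)
    (f := fun c => (c, -(x : EReal)))
    (EReal.continuousAt_add (Or.inr (EReal.coe_neg x ▸ EReal.coe_ne_bot (-x)))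
      (Or.inr (EReal.coe_neg x ▸ EReal.coe_ne_top (-x))))
    (continuous_id.prodMk continuous_const).continuousAt

lemma ENNReal.ofReal_posPart'_rpow {r : ℝ} (hr : 0 ≤ r) (x : ℝ) :
    ENNReal.ofReal (posPart' x ^ r) = (x : EReal).toENNReal ^ r := by
  rw [EReal.real_coe_toENNReal, posPart', ← ENNReal.ofReal_rpow_of_nonneg (le_max_right x 0) hr,
    ENNReal.ofReal_max, ENNReal.ofReal_zero, max_zero]

namespace ParRect

def slab (p a b : ℝ) (R : ParRect n) : Set ((Fin n → ℝ) × ℝ) :=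
  R.base ×ˢ Ioo (R.t + a * R.L ^ p) (R.t + b * R.L ^ p)

variable {p a b : ℝ} (R : ParRect n)

lemma upper_eq_slab (γ : ℝ) : R.upper p γ = R.slab p γ 1 := by
  rw [upper, slab, one_mul]

lemma lower_eq_slab (γ : ℝ) : R.lower p γ = R.slab p (-1) (-γ) := by
  simp only [lower, slab, neg_mul, one_mul, ← sub_eq_add_neg]

lemma rect_eq_slab : R.rect p = R.slab p (-1) 1 := by
  simp only [rect, slab, neg_mul, one_mul, ← sub_eq_add_neg]

lemma base_eq_Icc : R.base = Icc (fun i => R.x i - R.L) (fun i => R.x i + R.L) := by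
  ext y
  simp only [base, mem_ofPred_eq, mem_Icc, Pi.le_def, abs_le, ← forall_and]
  exact forall_congr' fun i => by constructor <;> rintro ⟨h₁, h₂⟩ <;> constructor <;> linarith

lemma base_mono {S : ParRect n} (hx : S.x = R.x) (hL : S.L ≤ R.L) : S.base ⊆ R.base :=
  fun _ hy i => (hx ▸ hy i).trans hL

lemma slab_subset_slab {a' b' : ℝ} (ha : a' ≤ a) (hb : b ≤ b') :
    R.slab p a b ⊆ R.slab p a' b' :=
  prod_mono subset_rfl <| Ioo_subset_Ioo
    (by gcongr; exact (Real.rpow_pos_of_pos R.hL p).le)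
    (by gcongr; exact (Real.rpow_pos_of_pos R.hL p).le)

lemma measurableSet_slab : MeasurableSet (R.slab p a b) := by
  rw [slab, base_eq_Icc]
  exact measurableSet_Icc.prod measurableSet_Ioo

lemma volume_slab :
    volume (R.slab p a b) = ENNReal.ofReal (2 * R.L) ^ n * ENNReal.ofReal ((b - a) * R.L ^ p) := by
  rw [slab, Measure.volume_eq_prod, Measure.prod_prod, base_eq_Icc, Real.volume_Icc_pi,
    Real.volume_Ioo]
  simp only [add_sub_sub_cancel, ← two_mul, Finset.prod_const, Finset.card_univ,
    Fintype.card_fin]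
  ring_nf

lemma volume_slab_ne_top : volume (R.slab p a b) ≠ ⊤ := by
  rw [volume_slab]
  exact mul_ne_top (pow_ne_top ofReal_ne_top) ofReal_ne_top

lemma volume_slab_ne_zero (hab : a < b) : volume (R.slab p a b) ≠ 0 := by
  rw [volume_slab]
  exact mul_ne_zero (pow_ne_zero _ (ofReal_pos.2 (by linarith [R.hL])).ne')
    (ofReal_pos.2 (mul_pos (by linarith) (Real.rpow_pos_of_pos R.hL p))).ne'

lemma volume_slab_mono {S : ParRect n} (hp : 0 ≤ p) (hab : a ≤ b) (hL : S.L ≤ R.L) :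
    volume (S.slab p a b) ≤ volume (R.slab p a b) := by
  rw [volume_slab, volume_slab]
  gcongr
  exact S.hL.le

lemma eventually_mem_slab {ι : Type*} {l : Filter ι} {S : ι → ParRect n}
    (hx : ∀ j, (S j).x = R.x) (ht : ∀ j, (S j).t = R.t)
    (hL : Tendsto (fun j => (S j).L) l (𝓝 R.L)) {y : Fin n → ℝ} {s : ℝ}
    (hy : ∀ i, |y i - R.x i| < R.L) (hs : s ∈ Ioo (R.t + a * R.L ^ p) (R.t + b * R.L ^ p)) :
    ∀ᶠ j in l, (y, s) ∈ (S j).slab p a b := by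
  have hLp : Tendsto (fun j => (S j).L ^ p) l (𝓝 (R.L ^ p)) := hL.rpow_const (Or.inl R.hL.ne')
  have hbase : ∀ᶠ j in l, y ∈ (S j).base :=
    eventually_all.2 fun i => (hL.eventually_const_lt (hy i)).mono fun j hj => by
      rw [hx j]; exact hj.le
  have hlow := ((tendsto_const_nhds (x := R.t)).add (hLp.const_mul a)).eventually_lt_const hs.1
  have hup := ((tendsto_const_nhds (x := R.t)).add (hLp.const_mul b)).eventually_const_lt hs.2
  filter_upwards [hbase, hlow, hup] with j h₁ h₂ h₃
  exact ⟨h₁, by rw [ht j]; exact ⟨h₂, h₃⟩⟩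

/-- Only the null boundary `∂Q(x, L) × ℝ` of the slab escapes the slabs of rectangles `S j → R`
with the same center. -/
lemma ae_eventually_mem_slab {ι : Type*} {l : Filter ι} {S : ι → ParRect n}
    (hx : ∀ j, (S j).x = R.x) (ht : ∀ j, (S j).t = R.t)
    (hL : Tendsto (fun j => (S j).L) l (𝓝 R.L)) :
    ∀ᵐ z ∂volume.restrict (R.slab p a b), ∀ᶠ j in l, z ∈ (S j).slab p a b := by
  have hcube : ∀ᵐ y : Fin n → ℝ, y ∈ R.base → ∀ i, |y i - R.x i| < R.L := by
    filter_upwards [(Measure.univ_pi_Ioo_ae_eq_Icc (μ := fun _ => volume)).symm.le] with y hy hyR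
    intro i
    have := (show y ∈ univ.pi fun i => Ioo (R.x i - R.L) (R.x i + R.L) from
      hy (by rw [← base_eq_Icc]; exact hyR)) i (mem_univ i)
    rw [abs_lt]; constructor <;> linarith [this.1, this.2]
  rw [ae_restrict_iff' R.measurableSet_slab]
  filter_upwards [Measure.quasiMeasurePreserving_fst.ae hcube] with z hz hzR
  exact R.eventually_mem_slab hx ht hL (hz hzR.1) hzR.2

lemma exists_rect_subset (hp : 0 < p) {u v : ℝ} (huv : u < v) :
    ∃ C : ParRect n, C.rect p ⊆ R.base ×ˢ Ioo u v := by
  set ε := min R.L (((v - u) / 2) ^ (1 / p))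
  have hε : 0 < ε := lt_min R.hL (Real.rpow_pos_of_pos (by linarith) _)
  have hεp : ε ^ p ≤ (v - u) / 2 := by
    calc ε ^ p ≤ (((v - u) / 2) ^ (1 / p)) ^ p :=
          Real.rpow_le_rpow hε.le (min_le_right _ _) hp.le
      _ = (v - u) / 2 := by
          rw [← Real.rpow_mul (by linarith), one_div_mul_cancel hp.ne', Real.rpow_one]
  refine ⟨⟨R.x, (u + v) / 2, ε, hε⟩, prod_mono (R.base_mono rfl (min_le_left _ _)) ?_⟩
  exact Ioo_subset_Ioo (by simp only; linarith) (by simp only; linarith)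

lemma exists_pairwise_disjoint_rect_subset (hp : 0 < p) {u v : ℝ} (huv : u < v) :
    ∃ C : ℕ → ParRect n, Pairwise (fun i j => Disjoint ((C i).rect p) ((C j).rect p)) ∧
      ∀ k, (C k).rect p ⊆ R.base ×ˢ Ioo u v := by
  set e : ℕ → ℝ := fun k => v - (v - u) / (k + 1)
  have he : StrictMono e := fun i j hij => by
    simp only [e]
    gcongr
  have hC : ∀ k, ∃ C : ParRect n, C.rect p ⊆ R.base ×ˢ Ioo (e k) (e (k + 1)) :=
    fun k => R.exists_rect_subset hp (he (Nat.lt_succ_self k))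
  choose C hC using hC
  refine ⟨C, fun i j hij => ?_, fun k => (hC k).trans (prod_mono subset_rfl
    (Ioo_subset_Ioo ?_ (sub_le_self _ (by positivity))))⟩
  · exact (Set.disjoint_prod.2 (Or.inr (he.monotone.pairwise_disjoint_on_Ioo_succ hij))).mono
      (hC i) (hC j)
  · simpa [e] using he.monotone (Nat.zero_le k)

end ParRect

/-- The quantity minimized in `osc`, at a constant `c ∈ [-∞, ∞]`: near-minimizing constants
then have convergent subsequences. -/
def oscAt (p γ r : ℝ) (f : (Fin n → ℝ) × ℝ → ℝ) (R : ParRect n) (c : EReal) : ℝ≥0∞ :=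
  ⨍⁻ z in R.upper p γ, ((f z : EReal) - c).toENNReal ^ r ∂volume +
    ⨍⁻ z in R.lower p γ, (c - f z).toENNReal ^ r ∂volume

section Oscillation

variable {p γ r : ℝ} {f : (Fin n → ℝ) × ℝ → ℝ}

lemma osc_eq_iInf_oscAt (hr : 0 ≤ r) (R : ParRect n) :
    osc p γ r f R = ⨅ c : ℝ, oscAt p γ r f R c := by
  simp only [osc, oscAt, setLAverage_eq, ← EReal.coe_sub, ENNReal.ofReal_posPart'_rpow hr]

lemma osc_le_oscAt (hr : 0 < r) (hγ : γ < 1) (R : ParRect n) (c : EReal) :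
    osc p γ r f R ≤ oscAt p γ r f R c := by
  have hγ' : -1 < -γ := neg_lt_neg hγ
  induction c using EReal.rec with
  | bot =>
    simp only [oscAt, EReal.coe_sub_bot, EReal.toENNReal_top, ENNReal.top_rpow_of_pos hr,
      R.upper_eq_slab, setLAverage_const (R.volume_slab_ne_zero hγ) R.volume_slab_ne_top]
    exact le_top.trans le_self_add
  | coe c => exact (osc_eq_iInf_oscAt hr.le R).trans_le (iInf_le _ c)
  | top =>
    simp only [oscAt, EReal.top_sub_coe, EReal.toENNReal_top, ENNReal.top_rpow_of_pos hr,
      R.lower_eq_slab, setLAverage_const (R.volume_slab_ne_zero hγ') R.volume_slab_ne_top]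
    exact le_top.trans le_add_self

theorem oscAt_le_liminf_oscAt {ι : Type*} {l : Filter ι} [l.NeBot] [l.IsCountablyGenerated]
    (hp : 0 ≤ p) (hγ : γ < 1) (hf : Measurable f) {R : ParRect n} {S : ι → ParRect n}
    (hx : ∀ j, (S j).x = R.x) (ht : ∀ j, (S j).t = R.t) (hLle : ∀ j, (S j).L ≤ R.L)
    (hL : Tendsto (fun j => (S j).L) l (𝓝 R.L)) {c : ι → EReal} {c₀ : EReal}
    (hc : Tendsto c l (𝓝 c₀)) :
    oscAt p γ r f R c₀ ≤ liminf (fun j => oscAt p γ r f (S j) (c j)) l := by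
  have hmeas : ∀ c : EReal, Measurable (fun z => ((f z : EReal) - c).toENNReal ^ r) ∧
      Measurable (fun z => (c - f z).toENNReal ^ r) := fun c =>
    ⟨(EReal.continuous_toENNReal.measurable.comp <| (Monotone.measurable fun _ _ h =>
      EReal.sub_le_sub h le_rfl).comp (measurable_coe_real_ereal.comp hf)).pow_const r,
    (EReal.continuous_toENNReal.measurable.comp <| (Antitone.measurable fun _ _ h =>
      EReal.sub_le_sub le_rfl h).comp (measurable_coe_real_ereal.comp hf)).pow_const r⟩
  have hcont : ∀ x : ℝ, Continuous (fun c : EReal => ((x : EReal) - c).toENNReal ^ r) ∧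
      Continuous (fun c : EReal => (c - x).toENNReal ^ r) := fun x =>
    ⟨ENNReal.continuous_rpow_const.comp (EReal.continuous_toENNReal.comp
      (EReal.continuous_coe_sub x)),
    ENNReal.continuous_rpow_const.comp (EReal.continuous_toENNReal.comp
      (EReal.continuous_sub_coe x))⟩
  have hupper := setLAverage_le_liminf_setLAverage (μ := volume) (l := l)
    (R.volume_slab_ne_zero hγ) (fun j => R.volume_slab_mono hp hγ.le (hLle j))
    (fun j => (S j).measurableSet_slab) (fun j => (hmeas (c j)).1) <| by
      filter_upwards [R.ae_eventually_mem_slab hx ht hL] with z hz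
      exact ⟨hz, ((hcont (f z)).1.tendsto c₀).comp hc⟩
  have hlower := setLAverage_le_liminf_setLAverage (μ := volume) (l := l)
    (R.volume_slab_ne_zero (neg_lt_neg hγ))
    (fun j => R.volume_slab_mono hp (neg_le_neg hγ.le) (hLle j))
    (fun j => (S j).measurableSet_slab) (fun j => (hmeas (c j)).2) <| by
      filter_upwards [R.ae_eventually_mem_slab hx ht hL] with z hz
      exact ⟨hz, ((hcont (f z)).2.tendsto c₀).comp hc⟩
  simp only [← ParRect.upper_eq_slab, ← ParRect.lower_eq_slab] at hupper hlower
  exact (add_le_add hupper hlower).trans ENNReal.le_liminf_add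

theorem osc_le_iSup_osc (hp : 0 ≤ p) (hγ : γ < 1) (hr : 0 < r) (hf : Measurable f)
    {R : ParRect n} {S : ℕ → ParRect n} (hx : ∀ m, (S m).x = R.x) (ht : ∀ m, (S m).t = R.t)
    (hLle : ∀ m, (S m).L ≤ R.L) (hL : Tendsto (fun m => (S m).L) atTop (𝓝 R.L)) :
    osc p γ r f R ≤ ⨆ m, osc p γ r f (S m) := by
  refine le_of_forall_gt_imp_ge_of_dense fun B hB => ?_
  have hc : ∀ m, ∃ c : ℝ, oscAt p γ r f (S m) c < B := fun m => by
    have := (le_iSup (fun m => osc p γ r f (S m)) m).trans_lt hB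
    rwa [osc_eq_iInf_oscAt hr.le, iInf_lt_iff] at this
  choose c hc using hc
  obtain ⟨c₀, -, φ, hφ, hlim⟩ :=
    isCompact_univ.tendsto_subseq (x := fun m => (c m : EReal)) fun _ => mem_univ _
  calc osc p γ r f R ≤ oscAt p γ r f R c₀ := osc_le_oscAt hr hγ R c₀
    _ ≤ liminf (fun j => oscAt p γ r f (S (φ j)) (c (φ j))) atTop :=
      oscAt_le_liminf_oscAt hp hγ hf (fun _ => hx _) (fun _ => ht _) (fun _ => hLle _)
        (hL.comp hφ.tendsto_atTop) hlim
    _ ≤ B := liminf_le_of_frequently_le' (Frequently.of_forall fun j => (hc _).le)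

end Oscillation

section JohnNirenberg

variable {p q γ r : ℝ} {f : (Fin n → ℝ) × ℝ → ℝ} {Ω : Set ((Fin n → ℝ) × ℝ)}

lemma le_pjnQ {Rs : ℕ → ParRect n} (hsub : ∀ i, (Rs i).rect p ⊆ Ω)
    (hdisj : Pairwise fun i j => Disjoint ((Rs i).rect p) ((Rs j).rect p)) :
    ∑' i, volume ((Rs i).upper p γ) * osc p γ r f (Rs i) ^ (q / r) ≤ pjnQ p q γ r f Ω :=
  le_iSup_of_le Rs <| le_iSup₂_of_le hsub hdisj le_rfl

lemma pjnQ_le_volume_mul_pbmo_rpow (hγ : -1 ≤ γ) (hq : 0 ≤ q) :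
    pjnQ p q γ r f Ω ≤ volume Ω * pbmo p γ r f Ω ^ q := by
  refine iSup_le fun Rs => iSup₂_le fun hsub hdisj => ?_
  have hupper : ∀ i, (Rs i).upper p γ ⊆ (Rs i).rect p := fun i => by
    rw [ParRect.upper_eq_slab, ParRect.rect_eq_slab]
    exact (Rs i).slab_subset_slab hγ le_rfl
  have hosc : ∀ i, osc p γ r f (Rs i) ^ (q / r) ≤ pbmo p γ r f Ω ^ q := fun i => by
    rw [div_eq_mul_inv, mul_comm, ENNReal.rpow_mul, ← one_div]
    exact ENNReal.rpow_le_rpow (le_iSup₂_of_le (Rs i) (hsub i) le_rfl) hq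
  calc ∑' i, volume ((Rs i).upper p γ) * osc p γ r f (Rs i) ^ (q / r)
      ≤ ∑' i, volume ((Rs i).upper p γ) * pbmo p γ r f Ω ^ q := by gcongr with i; exact hosc i
    _ = volume (⋃ i, (Rs i).upper p γ) * pbmo p γ r f Ω ^ q := by
      rw [ENNReal.tsum_mul_right, measure_iUnion
        (fun i j hij => (hdisj hij).mono (hupper i) (hupper j)) fun i => by
          rw [ParRect.upper_eq_slab]; exact (Rs i).measurableSet_slab]
    _ ≤ volume Ω * pbmo p γ r f Ω ^ q := by
      gcongr; exact iUnion_subset fun i => (hupper i).trans (hsub i)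

lemma volume_upper_mul_osc_rpow_le_pjnQ (hp : 0 < p) {R S : ParRect n} (hx : S.x = R.x)
    (ht : S.t = R.t) (hL : S.L < R.L) (hR : R.rect p ⊆ Ω) :
    volume (S.upper p γ) * osc p γ r f S ^ (q / r) ≤ pjnQ p q γ r f Ω := by
  have hSp : 0 < S.L ^ p := Real.rpow_pos_of_pos S.hL p
  have hLp : S.L ^ p < R.L ^ p := Real.rpow_lt_rpow S.hL.le hL hp
  obtain ⟨C, hCdisj, hCsub⟩ := R.exists_pairwise_disjoint_rect_subset hp
    (by linarith : R.t + S.L ^ p < R.t + R.L ^ p)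
  have hS : S.rect p ⊆ R.base ×ˢ Ioo (R.t - S.L ^ p) (R.t + S.L ^ p) :=
    prod_mono (R.base_mono hx hL.le) (by rw [ht])
  have hRbase : R.base ×ˢ Ioo (R.t - S.L ^ p) (R.t + R.L ^ p) ⊆ R.rect p :=
    prod_mono subset_rfl (Ioo_subset_Ioo (by linarith) le_rfl)
  have hSC : ∀ k, Disjoint (S.rect p) ((C k).rect p) := fun k =>
    (Set.disjoint_prod.2 (Or.inr (Set.disjoint_left.2 fun _ h₁ h₂ => lt_asymm h₁.2 h₂.1))).mono
      hS (hCsub k)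
  let Rs : ℕ → ParRect n := fun | 0 => S | k + 1 => C k
  have hsub : ∀ i, (Rs i).rect p ⊆ Ω := by
    rintro (_ | k)
    · exact (hS.trans ((prod_mono subset_rfl (Ioo_subset_Ioo le_rfl (by linarith))).trans
        hRbase)).trans hR
    · exact ((hCsub k).trans ((prod_mono subset_rfl (Ioo_subset_Ioo (by linarith) le_rfl)).trans
        hRbase)).trans hR
  have hdisj : Pairwise fun i j => Disjoint ((Rs i).rect p) ((Rs j).rect p) := by
    rintro (_ | i) (_ | j) hij
    · exact absurd rfl hij
    · exact hSC j
    · exact (hSC i).symm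
    · exact hCdisj (by omega)
  exact (ENNReal.le_tsum (f := fun i => volume ((Rs i).upper p γ) * osc p γ r f (Rs i) ^ (q / r))
    0).trans (le_pjnQ hsub hdisj)

lemma limsup_pjn_le_pbmo (hγ : -1 ≤ γ) (h0 : volume Ω ≠ 0) (htop : volume Ω ≠ ⊤) :
    limsup (fun q => pjn p q γ r f Ω) atTop ≤ pbmo p γ r f Ω := by
  have hlim : Tendsto (fun q : ℝ => volume Ω ^ (1 / q) * pbmo p γ r f Ω) atTop
      (𝓝 (pbmo p γ r f Ω)) := by
    simpa using ENNReal.Tendsto.mul_const (ENNReal.tendsto_rpow_one_div_atTop h0 htop)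
      (Or.inl one_ne_zero)
  refine (limsup_le_limsup ?_).trans hlim.limsup_eq.le
  filter_upwards [eventually_gt_atTop 0] with q hq
  calc pjn p q γ r f Ω ≤ (volume Ω * pbmo p γ r f Ω ^ q) ^ (1 / q) :=
        ENNReal.rpow_le_rpow (pjnQ_le_volume_mul_pbmo_rpow hγ hq.le) (by positivity)
    _ = volume Ω ^ (1 / q) * pbmo p γ r f Ω := by
      rw [ENNReal.mul_rpow_of_nonneg _ _ (by positivity), ← ENNReal.rpow_mul,
        mul_one_div_cancel hq.ne', ENNReal.rpow_one]

lemma osc_rpow_le_liminf_pjn (hp : 0 < p) (hγ : γ < 1) {R S : ParRect n} (hx : S.x = R.x)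
    (ht : S.t = R.t) (hL : S.L < R.L) (hR : R.rect p ⊆ Ω) :
    osc p γ r f S ^ (1 / r) ≤ liminf (fun q => pjn p q γ r f Ω) atTop := by
  have hV0 : volume (S.upper p γ) ≠ 0 := by
    rw [ParRect.upper_eq_slab]; exact S.volume_slab_ne_zero hγ
  have hV : volume (S.upper p γ) ≠ ⊤ := by
    rw [ParRect.upper_eq_slab]; exact S.volume_slab_ne_top
  have hlim : Tendsto (fun q : ℝ => volume (S.upper p γ) ^ (1 / q) * osc p γ r f S ^ (1 / r))
      atTop (𝓝 (osc p γ r f S ^ (1 / r))) := by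
    simpa using ENNReal.Tendsto.mul_const (ENNReal.tendsto_rpow_one_div_atTop hV0 hV)
      (Or.inl one_ne_zero)
  refine hlim.liminf_eq.symm.trans_le (liminf_le_liminf ?_)
  filter_upwards [eventually_gt_atTop 0] with q hq
  calc volume (S.upper p γ) ^ (1 / q) * osc p γ r f S ^ (1 / r)
      = (volume (S.upper p γ) * osc p γ r f S ^ (q / r)) ^ (1 / q) := by
        rw [ENNReal.mul_rpow_of_nonneg _ _ (by positivity), ← ENNReal.rpow_mul]
        congr 2
        field_simp
    _ ≤ pjn p q γ r f Ω :=
      ENNReal.rpow_le_rpow (volume_upper_mul_osc_rpow_le_pjnQ hp hx ht hL hR) (by positivity)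

lemma pbmo_le_liminf_pjn (hp : 0 < p) (hγ : γ < 1) (hr : 0 < r) (hf : Measurable f) :
    pbmo p γ r f Ω ≤ liminf (fun q => pjn p q γ r f Ω) atTop := by
  refine iSup₂_le fun R hR => ?_
  obtain ⟨L, -, hLmem, hLlim⟩ := exists_seq_strictMono_tendsto' R.hL
  let S : ℕ → ParRect n := fun m => ⟨R.x, R.t, L m, (hLmem m).1⟩
  rw [one_div, ENNReal.rpow_inv_le_iff hr]
  refine (osc_le_iSup_osc hp.le hγ hr hf (S := S) (fun _ => rfl) (fun _ => rfl)
    (fun m => (hLmem m).2.le) hLlim).trans (iSup_le fun m => ?_)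
  rw [← ENNReal.rpow_inv_le_iff hr, ← one_div]
  exact osc_rpow_le_liminf_pjn hp hγ (R := R) (S := S m) rfl rfl (hLmem m).2 hR

end JohnNirenberg

theorem pjn_tendsto_pbmo_general (n : ℕ) (p γ r : ℝ) (hp : 1 < p) (hγ0 : 0 ≤ γ) (hγ1 : γ < 1)
    (hr : 0 < r) (Ω : Set (Fin n → ℝ)) (T : ℝ)
    (h0 : 0 < volume (Ω ×ˢ Ioo (0 : ℝ) T)) (h1 : volume (Ω ×ˢ Ioo (0 : ℝ) T) < ⊤)
    (f : (Fin n → ℝ) × ℝ → ℝ) (hf : Measurable f) :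
    Filter.Tendsto (fun q : ℝ => pjn p q γ r f (Ω ×ˢ Ioo (0 : ℝ) T)) Filter.atTop
      (nhds (pbmo p γ r f (Ω ×ˢ Ioo (0 : ℝ) T))) :=
  tendsto_of_le_liminf_of_limsup_le (pbmo_le_liminf_pjn (by linarith) hγ1 hr hf)
    (limsup_pjn_le_pbmo (by linarith) h0.ne' h1.ne)

/-- `lim_{q→∞} ‖f‖_{PJN⁺_{q,γ,r}(Ω_T)} = ‖f‖_{PBMO⁺_{γ,r}(Ω_T)}` (in `[0,∞]`)
on a space-time cylinder of finite positive measure. -/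
theorem pjn_tendsto_pbmo (n : ℕ) (p γ r : ℝ) (hp : 1 < p) (hγ0 : 0 ≤ γ) (hγ1 : γ < 1)
    (hr : 0 < r) (Ω : Set (Fin n → ℝ)) (T : ℝ) (hT : 0 < T)
    (h0 : 0 < volume (Ω ×ˢ Ioo (0 : ℝ) T)) (h1 : volume (Ω ×ˢ Ioo (0 : ℝ) T) < ⊤)
    (f : (Fin n → ℝ) × ℝ → ℝ) (hf : Measurable f)
    (hloc : ∀ R : ParRect n, R.rect p ⊆ Ω ×ˢ Ioo (0 : ℝ) T →
      ∫⁻ z in R.rect p, ENNReal.ofReal (|f z| ^ r) < ⊤) :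
    Filter.Tendsto (fun q : ℝ => pjn p q γ r f (Ω ×ˢ Ioo (0 : ℝ) T)) Filter.atTop
      (nhds (pbmo p γ r f (Ω ×ˢ Ioo (0 : ℝ) T))) :=
  pjn_tendsto_pbmo_general n p γ r hp hγ0 hγ1 hr Ω T h0 h1 f hf

end
end

section
/- Let Ω_T ⊂ ℝ^{n+1} be a space-time cylinder, 0 < ρ ≤ γ < 1 and 0 < r ≤ s < q < ∞. Then ||f||_{PJN^+_{q,γ,r}(Ω_T)} ≤ c₀ ((1-ρ)/(1-γ))^{1/s - 1/q} ||f||_{PJN^+_{q,ρ,s}(Ω_T)}, where c₀ = max{1, 2^{1/r - 1}} max{1, 2^{1 - 1/s}}. -/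
open MeasureTheory ENNReal Set Filter

noncomputable section

variable {n : ℕ}

/-!
Fix a constant `c` and write `K = (1 - ρ) / (1 - γ)`. Jensen's inequality on `R^±(γ)` raises the
exponent of the two averages in the oscillation from `r` to `s`; concavity of `x ↦ x ^ (r / s)`
merges them at the cost of `2 ^ (1 - r / s)`; and since `R^±(γ) ⊆ R^±(ρ)` with
`|R^±(ρ)| = K |R^±(γ)|`, an average over `R^±(γ)` is at most `K` times the average over `R^±(ρ)`.
Taking the infimum over `c` gives `osc_{γ,r} ≤ 2^{1-r/s} K^{r/s} osc_{ρ,s}^{r/s}`. Raising this to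
the power `q / r` and trading `|R^+(γ)| = |R^+(ρ)| / K` leaves the factor
`(2^{1/r-1/s} K^{1/s-1/q})^q` on each rectangle of a disjoint family, and
`2^{1/r-1/s} = 2^{1/r-1} 2^{1-1/s}` is at most the constant `c₀`.
-/

namespace ENNReal

theorem rpow_add_rpow_le_two_rpow_mul_rpow_add (a b : ℝ≥0∞) {t : ℝ} (ht₀ : 0 < t) (ht₁ : t ≤ 1) :
    a ^ t + b ^ t ≤ 2 ^ (1 - t) * (a + b) ^ t := by
  have h := rpow_add_le_mul_rpow_add_rpow (a ^ t) (b ^ t) (one_le_one_div ht₀ ht₁)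
  rw [← rpow_mul, ← rpow_mul, mul_one_div_cancel ht₀.ne', rpow_one, rpow_one] at h
  calc a ^ t + b ^ t = ((a ^ t + b ^ t) ^ (1 / t)) ^ t := by
        rw [← rpow_mul, one_div_mul_cancel ht₀.ne', rpow_one]
    _ ≤ (2 ^ (1 / t - 1) * (a + b)) ^ t := by gcongr
    _ = 2 ^ (1 - t) * (a + b) ^ t := by
        rw [mul_rpow_of_nonneg _ _ ht₀.le, ← rpow_mul]
        congr 2
        field_simp

end ENNReal

section Average

variable {α : Type*} [MeasurableSpace α] {μ : Measure α} {r s : ℝ}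

theorem lintegral_rpow_le_lintegral_rpow_rpow [IsProbabilityMeasure μ] (hr : 0 < r) (hrs : r ≤ s)
    (G : α → ℝ≥0∞) : ∫⁻ x, G x ^ r ∂μ ≤ (∫⁻ x, G x ^ s ∂μ) ^ (r / s) := by
  obtain ⟨g, hg, hgG, hg_eq⟩ := exists_measurable_le_lintegral_eq μ fun x => G x ^ r
  have hr' : r ≠ 0 := hr.ne'
  have hs : 0 < s := hr.trans_le hrs
  have hLp := eLpNorm'_le_eLpNorm'_of_exponent_le hr hrs μ
    (hg.pow_const r⁻¹).aemeasurable.aestronglyMeasurable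
  simp only [eLpNorm'_eq_lintegral_enorm, enorm_eq_self, rpow_inv_rpow hr'] at hLp
  calc ∫⁻ x, G x ^ r ∂μ = ((∫⁻ x, g x ∂μ) ^ (1 / r)) ^ r := by
        rw [hg_eq, ← rpow_mul, one_div_mul_cancel hr', rpow_one]
    _ ≤ ((∫⁻ x, (g x ^ r⁻¹) ^ s ∂μ) ^ (1 / s)) ^ r := by gcongr
    _ ≤ (∫⁻ x, G x ^ s ∂μ) ^ (r / s) := by
        rw [← rpow_mul, one_div_mul_eq_div]
        gcongr with x
        exact (rpow_inv_le_iff hr).2 (hgG x)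

theorem laverage_rpow_le_laverage_rpow_rpow (hr : 0 < r) (hrs : r ≤ s) (G : α → ℝ≥0∞) :
    ⨍⁻ x, G x ^ r ∂μ ≤ (⨍⁻ x, G x ^ s ∂μ) ^ (r / s) := by
  rcases eq_or_ne μ 0 with rfl | hμ
  · simp
  by_cases hμ_top : μ univ = ∞
  · simp [laverage_eq, hμ_top]
  have : IsFiniteMeasure μ := ⟨lt_top_iff_ne_top.2 hμ_top⟩
  have : NeZero μ := ⟨hμ⟩
  simpa only [laverage_eq'] using
    lintegral_rpow_le_lintegral_rpow_rpow (μ := (μ univ)⁻¹ • μ) hr hrs G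

theorem setLAverage_le_mul_setLAverage {A B : Set α} {K : ℝ≥0∞} (hAB : A ⊆ B)
    (hB : μ B = K * μ A) (hK₀ : K ≠ 0) (hK : K ≠ ∞) (F : α → ℝ≥0∞) :
    ⨍⁻ x in A, F x ∂μ ≤ K * ⨍⁻ x in B, F x ∂μ := by
  rw [setLAverage_eq, setLAverage_eq, hB, ← mul_div_assoc, ENNReal.mul_div_mul_left _ _ hK₀ hK]
  exact ENNReal.div_le_div_right (lintegral_mono_set hAB) _

theorem setLAverage_rpow_add_le {A₁ A₂ B₁ B₂ : Set α} {K : ℝ≥0∞} (hr : 0 < r) (hrs : r ≤ s)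
    (h₁ : A₁ ⊆ B₁) (h₂ : A₂ ⊆ B₂) (hB₁ : μ B₁ = K * μ A₁) (hB₂ : μ B₂ = K * μ A₂)
    (hK₀ : K ≠ 0) (hK : K ≠ ∞) (G₁ G₂ : α → ℝ≥0∞) :
    ⨍⁻ x in A₁, G₁ x ^ r ∂μ + ⨍⁻ x in A₂, G₂ x ^ r ∂μ ≤
      2 ^ (1 - r / s) * K ^ (r / s) *
        (⨍⁻ x in B₁, G₁ x ^ s ∂μ + ⨍⁻ x in B₂, G₂ x ^ s ∂μ) ^ (r / s) := by
  have ht : 0 < r / s := div_pos hr (hr.trans_le hrs)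
  calc ⨍⁻ x in A₁, G₁ x ^ r ∂μ + ⨍⁻ x in A₂, G₂ x ^ r ∂μ
      ≤ (⨍⁻ x in A₁, G₁ x ^ s ∂μ) ^ (r / s) + (⨍⁻ x in A₂, G₂ x ^ s ∂μ) ^ (r / s) :=
        add_le_add (laverage_rpow_le_laverage_rpow_rpow hr hrs G₁)
          (laverage_rpow_le_laverage_rpow_rpow hr hrs G₂)
    _ ≤ 2 ^ (1 - r / s) * (⨍⁻ x in A₁, G₁ x ^ s ∂μ + ⨍⁻ x in A₂, G₂ x ^ s ∂μ) ^ (r / s) :=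
        ENNReal.rpow_add_rpow_le_two_rpow_mul_rpow_add _ _ ht (div_le_one_of_le₀ hrs (by linarith))
    _ ≤ 2 ^ (1 - r / s) *
          (K * (⨍⁻ x in B₁, G₁ x ^ s ∂μ + ⨍⁻ x in B₂, G₂ x ^ s ∂μ)) ^ (r / s) := by
        rw [mul_add]
        gcongr
        · exact setLAverage_le_mul_setLAverage h₁ hB₁ hK₀ hK _
        · exact setLAverage_le_mul_setLAverage h₂ hB₂ hK₀ hK _
    _ = _ := by rw [ENNReal.mul_rpow_of_nonneg _ _ ht.le, mul_assoc]

end Average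

namespace ParRect

variable (R : ParRect n) (p : ℝ) {ρ γ : ℝ}

theorem volume_upper :
    volume (R.upper p γ) = volume R.base * ENNReal.ofReal ((1 - γ) * R.L ^ p) := by
  rw [ParRect.upper, Measure.volume_eq_prod, Measure.prod_prod, Real.volume_Ioo]
  congr 2
  ring

theorem volume_lower : volume (R.lower p γ) = volume (R.upper p γ) := by
  rw [volume_upper, ParRect.lower, Measure.volume_eq_prod, Measure.prod_prod, Real.volume_Ioo]
  congr 2
  ring

theorem volume_upper_eq_mul (hρ : ρ ≤ 1) (hγ : γ < 1) :
    volume (R.upper p ρ) = ENNReal.ofReal ((1 - ρ) / (1 - γ)) * volume (R.upper p γ) := by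
  have hγ' : 1 - γ ≠ 0 := by linarith
  rw [volume_upper, volume_upper, mul_left_comm,
    ← ENNReal.ofReal_mul (div_nonneg (by linarith) (by linarith))]
  congr 2
  field_simp

theorem volume_lower_eq_mul (hρ : ρ ≤ 1) (hγ : γ < 1) :
    volume (R.lower p ρ) = ENNReal.ofReal ((1 - ρ) / (1 - γ)) * volume (R.lower p γ) := by
  simpa only [volume_lower] using R.volume_upper_eq_mul p hρ hγ

theorem upper_subset_upper (hργ : ρ ≤ γ) : R.upper p γ ⊆ R.upper p ρ := by
  have := R.hL
  exact prod_mono subset_rfl (Ioo_subset_Ioo (by gcongr) le_rfl)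

theorem lower_subset_lower (hργ : ρ ≤ γ) : R.lower p γ ⊆ R.lower p ρ := by
  have := R.hL
  exact prod_mono subset_rfl (Ioo_subset_Ioo le_rfl (by gcongr))

end ParRect

theorem osc_eq_iInf_setLAverage (p γ : ℝ) {r : ℝ} (hr : 0 ≤ r) (f : (Fin n → ℝ) × ℝ → ℝ)
    (R : ParRect n) :
    osc p γ r f R = ⨅ c : ℝ,
      (⨍⁻ z in R.upper p γ, ENNReal.ofReal (f z - c) ^ r ∂volume +
        ⨍⁻ z in R.lower p γ, ENNReal.ofReal (c - f z) ^ r ∂volume) := by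
  have h : ∀ x : ℝ, ENNReal.ofReal (posPart' x ^ r) = ENNReal.ofReal x ^ r := fun x => by
    rw [posPart', ← ENNReal.ofReal_rpow_of_nonneg (le_max_right _ _) hr, ENNReal.ofReal_max,
      ENNReal.ofReal_zero, max_eq_left zero_le]
  simp only [osc, h, setLAverage_eq]

theorem osc_le_mul_osc_rpow (p : ℝ) {γ ρ r s : ℝ} (hργ : ρ ≤ γ) (hγ : γ < 1) (hr : 0 < r)
    (hrs : r ≤ s) (f : (Fin n → ℝ) × ℝ → ℝ) (R : ParRect n) :
    osc p γ r f R ≤ 2 ^ (1 - r / s) * ENNReal.ofReal ((1 - ρ) / (1 - γ)) ^ (r / s) *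
      osc p ρ s f R ^ (r / s) := by
  have ht : 0 < r / s := div_pos hr (hr.trans_le hrs)
  have hρ : ρ ≤ 1 := by linarith
  have hK₀ : ENNReal.ofReal ((1 - ρ) / (1 - γ)) ≠ 0 :=
    (ENNReal.ofReal_pos.2 (div_pos (by linarith) (by linarith))).ne'
  have hD₀ : 2 ^ (1 - r / s) * ENNReal.ofReal ((1 - ρ) / (1 - γ)) ^ (r / s) ≠ 0 := by
    simp [hK₀]
  have hD : 2 ^ (1 - r / s) * ENNReal.ofReal ((1 - ρ) / (1 - γ)) ^ (r / s) ≠ ∞ := by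
    have hrs' : 0 ≤ 1 - r / s := by linarith [div_le_one_of_le₀ hrs (hr.trans_le hrs).le]
    exact ENNReal.mul_ne_top (ENNReal.rpow_ne_top_of_nonneg hrs' ENNReal.ofNat_ne_top)
      (ENNReal.rpow_ne_top_of_nonneg ht.le ENNReal.ofReal_ne_top)
  have hrpow_iInf (Y : ℝ → ℝ≥0∞) : (⨅ c, Y c) ^ (r / s) = ⨅ c, Y c ^ (r / s) :=
    (ENNReal.orderIsoRpow _ ht).map_iInf Y
  rw [osc_eq_iInf_setLAverage p γ hr.le, osc_eq_iInf_setLAverage p ρ (hr.trans_le hrs).le,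
    hrpow_iInf, ENNReal.mul_iInf_of_ne hD₀ hD]
  exact iInf_mono fun c => setLAverage_rpow_add_le hr hrs (R.upper_subset_upper p hργ)
    (R.lower_subset_lower p hργ) (R.volume_upper_eq_mul p hρ hγ) (R.volume_lower_eq_mul p hρ hγ)
    hK₀ ENNReal.ofReal_ne_top _ _

theorem volume_upper_mul_osc_rpow_le (p : ℝ) {q γ ρ r s : ℝ} (hργ : ρ ≤ γ) (hγ : γ < 1)
    (hr : 0 < r) (hrs : r ≤ s) (hq : 0 < q) (f : (Fin n → ℝ) × ℝ → ℝ) (R : ParRect n) :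
    volume (R.upper p γ) * osc p γ r f R ^ (q / r) ≤
      (2 ^ (1 / r - 1 / s) * ENNReal.ofReal ((1 - ρ) / (1 - γ)) ^ (1 / s - 1 / q)) ^ q *
        (volume (R.upper p ρ) * osc p ρ s f R ^ (q / s)) := by
  have hs : 0 < s := hr.trans_le hrs
  set κ := ENNReal.ofReal ((1 - ρ) / (1 - γ))
  have hκ₀ : κ ≠ 0 := (ENNReal.ofReal_pos.2 (div_pos (by linarith) (by linarith))).ne'
  have hκ_split : κ ^ (q / s) = κ ^ (q / s - 1) * κ := by
    rw [ENNReal.rpow_sub _ _ hκ₀ ENNReal.ofReal_ne_top, ENNReal.rpow_one,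
      ENNReal.div_mul_cancel hκ₀ ENNReal.ofReal_ne_top]
  have e₁ : (1 - r / s) * (q / r) = (1 / r - 1 / s) * q := by field_simp
  have e₂ : r / s * (q / r) = q / s := by field_simp
  have e₃ : (1 / s - 1 / q) * q = q / s - 1 := by field_simp
  calc volume (R.upper p γ) * osc p γ r f R ^ (q / r)
      ≤ volume (R.upper p γ) *
          (2 ^ (1 - r / s) * κ ^ (r / s) * osc p ρ s f R ^ (r / s)) ^ (q / r) := by
        gcongr
        exact osc_le_mul_osc_rpow p hργ hγ hr hrs f R
    _ = _ := by
        rw [R.volume_upper_eq_mul p (ρ := ρ) (by linarith) hγ]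
        simp only [ENNReal.mul_rpow_of_nonneg _ _ (by positivity : 0 ≤ q / r),
          ENNReal.mul_rpow_of_nonneg _ _ hq.le, ← ENNReal.rpow_mul, e₁, e₂, e₃, hκ_split]
        ring

theorem two_rpow_sub_le_max_mul_max (r s : ℝ) :
    (2 : ℝ) ^ (1 / r - 1 / s) ≤ max 1 ((2 : ℝ) ^ (1 / r - 1)) * max 1 ((2 : ℝ) ^ (1 - 1 / s)) :=
  calc (2 : ℝ) ^ (1 / r - 1 / s) = 2 ^ (1 / r - 1) * 2 ^ (1 - 1 / s) := by
        rw [← Real.rpow_add two_pos]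
        ring_nf
    _ ≤ _ := by gcongr <;> exact le_max_right _ _

theorem two_rpow_mul_ofReal_rpow_le (r s : ℝ) {K e : ℝ} (hK : 0 ≤ K) (he : 0 ≤ e) :
    (2 : ℝ≥0∞) ^ (1 / r - 1 / s) * ENNReal.ofReal K ^ e ≤
      ENNReal.ofReal (max 1 ((2 : ℝ) ^ (1 / r - 1)) * max 1 ((2 : ℝ) ^ (1 - 1 / s)) * K ^ e) := by
  rw [ENNReal.ofReal_mul (by positivity), ENNReal.ofReal_rpow_of_nonneg hK he,
    ← ENNReal.ofReal_ofNat 2, ENNReal.ofReal_rpow_of_pos two_pos]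
  gcongr
  exact two_rpow_sub_le_max_mul_max r s

theorem pjnQ_le_mul_pjnQ {p q γ ρ r s : ℝ} {f : (Fin n → ℝ) × ℝ → ℝ}
    {Ω : Set ((Fin n → ℝ) × ℝ)} {C : ℝ≥0∞}
    (h : ∀ R : ParRect n, volume (R.upper p γ) * osc p γ r f R ^ (q / r) ≤
      C * (volume (R.upper p ρ) * osc p ρ s f R ^ (q / s))) :
    pjnQ p q γ r f Ω ≤ C * pjnQ p q ρ s f Ω := by
  refine iSup₂_le fun Rs hΩ => iSup_le fun hdisj => ?_
  calc ∑' i, volume ((Rs i).upper p γ) * osc p γ r f (Rs i) ^ (q / r)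
      ≤ ∑' i, C * (volume ((Rs i).upper p ρ) * osc p ρ s f (Rs i) ^ (q / s)) :=
        ENNReal.tsum_le_tsum fun i => h (Rs i)
    _ = C * ∑' i, volume ((Rs i).upper p ρ) * osc p ρ s f (Rs i) ^ (q / s) :=
        ENNReal.tsum_mul_left
    _ ≤ C * pjnQ p q ρ s f Ω := by
        gcongr
        exact le_iSup₂_of_le Rs hΩ (le_iSup_of_le hdisj le_rfl)

theorem pjn_lag_comparison_easy_general (n : ℕ) (p q γ ρ r s : ℝ)
    (hργ : ρ ≤ γ) (hγ1 : γ < 1)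
    (hr : 0 < r) (hrs : r ≤ s) (hsq : s < q)
    (Ω : Set (Fin n → ℝ)) (T : ℝ)
    (f : (Fin n → ℝ) × ℝ → ℝ) :
    pjn p q γ r f (Ω ×ˢ Ioo (0 : ℝ) T) ≤
      ENNReal.ofReal (max 1 ((2 : ℝ) ^ (1 / r - 1)) * max 1 ((2 : ℝ) ^ (1 - 1 / s)) *
        ((1 - ρ) / (1 - γ)) ^ (1 / s - 1 / q)) *
      pjn p q ρ s f (Ω ×ˢ Ioo (0 : ℝ) T) := by
  set C := ENNReal.ofReal (max 1 ((2 : ℝ) ^ (1 / r - 1)) * max 1 ((2 : ℝ) ^ (1 - 1 / s)) *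
    ((1 - ρ) / (1 - γ)) ^ (1 / s - 1 / q))
  have hs : 0 < s := hr.trans_le hrs
  have hq : 0 < q := hs.trans hsq
  have hC : 2 ^ (1 / r - 1 / s) * ENNReal.ofReal ((1 - ρ) / (1 - γ)) ^ (1 / s - 1 / q) ≤ C :=
    two_rpow_mul_ofReal_rpow_le r s (div_nonneg (by linarith) (by linarith))
      (sub_nonneg.2 (one_div_le_one_div_of_le hs hsq.le))
  have hQ : pjnQ p q γ r f (Ω ×ˢ Ioo 0 T) ≤ C ^ q * pjnQ p q ρ s f (Ω ×ˢ Ioo 0 T) :=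
    pjnQ_le_mul_pjnQ fun R => (volume_upper_mul_osc_rpow_le p hργ hγ1 hr hrs hq f R).trans
      (mul_le_mul_left (ENNReal.rpow_le_rpow hC hq.le) _)
  calc pjn p q γ r f (Ω ×ˢ Ioo 0 T) ≤ (C ^ q * pjnQ p q ρ s f (Ω ×ˢ Ioo 0 T)) ^ (1 / q) := by
        unfold pjn
        gcongr
    _ = C * pjn p q ρ s f (Ω ×ˢ Ioo 0 T) := by
        rw [ENNReal.mul_rpow_of_nonneg _ _ (by positivity), ← ENNReal.rpow_mul,
          mul_one_div_cancel hq.ne', ENNReal.rpow_one, pjn]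

/-- First inequality of Corollary 4.2:
`‖f‖_{PJN⁺_{q,γ,r}(Ω_T)} ≤ c₀ ((1-ρ)/(1-γ))^{1/s-1/q} ‖f‖_{PJN⁺_{q,ρ,s}(Ω_T)}`, where
`c₀ = max{1, 2^{1/r-1}} max{1, 2^{1-1/s}}`. -/
theorem pjn_lag_comparison_easy (n : ℕ) (p q γ ρ r s : ℝ) (hp : 1 < p)
    (hρ0 : 0 < ρ) (hργ : ρ ≤ γ) (hγ1 : γ < 1)
    (hr : 0 < r) (hrs : r ≤ s) (hsq : s < q)
    (Ω : Set (Fin n → ℝ)) (T : ℝ) (hT : 0 < T)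
    (f : (Fin n → ℝ) × ℝ → ℝ) (hf : Measurable f) :
    pjn p q γ r f (Ω ×ˢ Ioo (0 : ℝ) T) ≤
      ENNReal.ofReal (max 1 ((2 : ℝ) ^ (1 / r - 1)) * max 1 ((2 : ℝ) ^ (1 - 1 / s)) *
        ((1 - ρ) / (1 - γ)) ^ (1 / s - 1 / q)) *
      pjn p q ρ s f (Ω ×ˢ Ioo (0 : ℝ) T) :=
  pjn_lag_comparison_easy_general n p q γ ρ r s hργ hγ1 hr hrs hsq Ω T f
end
end

section
/- Let 1 ≤ r < q < ∞, 0 ≤ γ < 1, and f, g ∈ PJN^+_{q,γ,r}(Ω_T). Then ||max{f, g}||_{PJN^+_{q,γ,r}(Ω_T)} ≤ ||f||_{PJN^+_{q,γ,r}(Ω_T)} + ||g||_{PJN^+_{q,γ,r}(Ω_T)} and the same bound holds for min{f, g}. -/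
open MeasureTheory ENNReal Set Filter

noncomputable section

variable {n : ℕ}

/-!
On each rectangle `R`, `osc(h, R)^{1/r}` is the infimum over `c` of an `L^r` norm of one function
for the normalized measure on `R⁺(γ) ∪ R⁻(γ)`: the positive part of `h - c` on `R⁺(γ)` and its
negative part on `R⁻(γ)`. Testing `max{f,g}` against `max{c,d}` (and `min{f,g}` against `min{c,d}`),
the pointwise bounds for positive and negative parts and Minkowski's inequality in `L^r` make
`osc^{1/r}` subadditive. Writing the `PJN` sum for a disjoint family as an `ℓ^q` norm of
`|Rᵢ⁺(γ)|^{1/q} osc(·, Rᵢ)^{1/r}`, Minkowski's inequality in `ℓ^q` gives the bound on the norm.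
-/

theorem posPart'_nonneg (x : ℝ) : 0 ≤ posPart' x := le_max_right x 0

theorem posPart'_max_sub_max_le (a b c d : ℝ) :
    posPart' (max a b - max c d) ≤ posPart' (a - c) + posPart' (b - d) := by
  simp only [posPart']; grind

theorem posPart'_min_sub_min_le (a b c d : ℝ) :
    posPart' (min a b - min c d) ≤ posPart' (a - c) + posPart' (b - d) := by
  simp only [posPart']; grind

theorem ENNReal.iInf_rpow {ι : Sort*} (f : ι → ℝ≥0∞) {y : ℝ} (hy : 0 < y) :
    (⨅ i, f i) ^ y = ⨅ i, f i ^ y :=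
  (ENNReal.orderIsoRpow y hy).map_iInf f

theorem ENNReal.tsum_rpow_add_le {ι : Type*} (f g : ι → ℝ≥0∞) {p : ℝ} (hp : 1 ≤ p) :
    (∑' i, (f i + g i) ^ p) ^ (1 / p) ≤ (∑' i, f i ^ p) ^ (1 / p) + (∑' i, g i ^ p) ^ (1 / p) := by
  let _ : MeasurableSpace ι := ⊤
  simpa only [lintegral_count, Pi.add_apply] using
    ENNReal.lintegral_Lp_add_le (μ := Measure.count (α := ι)) measurable_from_top.aemeasurable
      measurable_from_top.aemeasurable hp

namespace ParRect

theorem measurableSet_base (R : ParRect n) : MeasurableSet R.base := by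
  simp only [ParRect.base, Set.ofPred_forall]
  exact .iInter fun i => measurableSet_le (by fun_prop) measurable_const

theorem measurableSet_upper (p γ : ℝ) (R : ParRect n) : MeasurableSet (R.upper p γ) :=
  R.measurableSet_base.prod measurableSet_Ioo

theorem measurableSet_lower (p γ : ℝ) (R : ParRect n) : MeasurableSet (R.lower p γ) :=
  R.measurableSet_base.prod measurableSet_Ioo

theorem lt_snd_of_mem_upper {p γ : ℝ} (hγ : 0 ≤ γ) (R : ParRect n) {z : (Fin n → ℝ) × ℝ}
    (hz : z ∈ R.upper p γ) : R.t < z.2 := by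
  have : 0 ≤ γ * R.L ^ p := mul_nonneg hγ (Real.rpow_nonneg R.hL.le p)
  linarith [hz.2.1]

theorem snd_lt_of_mem_lower {p γ : ℝ} (hγ : 0 ≤ γ) (R : ParRect n) {z : (Fin n → ℝ) × ℝ}
    (hz : z ∈ R.lower p γ) : z.2 < R.t := by
  have : 0 ≤ γ * R.L ^ p := mul_nonneg hγ (Real.rpow_nonneg R.hL.le p)
  linarith [hz.2.2]

def oscMeasure (p γ : ℝ) (R : ParRect n) : Measure ((Fin n → ℝ) × ℝ) :=
  (volume (R.upper p γ))⁻¹ • volume.restrict (R.upper p γ) +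
    (volume (R.lower p γ))⁻¹ • volume.restrict (R.lower p γ)

end ParRect

/-- `(h - c)₊` after the centre time of `R`, `(h - c)₋` before it; for `γ ≥ 0` the centre time
separates `R⁺(γ)` from `R⁻(γ)`. -/
def oscDeviation (h : (Fin n → ℝ) × ℝ → ℝ) (c : ℝ) (R : ParRect n) (z : (Fin n → ℝ) × ℝ) :
    ℝ≥0∞ :=
  ENNReal.ofReal (posPart' (if R.t < z.2 then h z - c else c - h z))

theorem measurable_oscDeviation {h : (Fin n → ℝ) × ℝ → ℝ} (hh : Measurable h) (c : ℝ)
    (R : ParRect n) : Measurable (oscDeviation h c R) := by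
  unfold oscDeviation posPart'
  refine ENNReal.measurable_ofReal.comp (.max (.ite ?_ ?_ ?_) measurable_const)
  · exact measurableSet_lt measurable_const measurable_snd
  all_goals fun_prop

theorem lintegral_oscDeviation_rpow {p γ r : ℝ} (hγ : 0 ≤ γ) (hr : 0 ≤ r)
    (h : (Fin n → ℝ) × ℝ → ℝ) (c : ℝ) (R : ParRect n) :
    ∫⁻ z, oscDeviation h c R z ^ r ∂(R.oscMeasure p γ) =
      (∫⁻ z in R.upper p γ, ENNReal.ofReal (posPart' (h z - c) ^ r)) / volume (R.upper p γ) +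
      (∫⁻ z in R.lower p γ, ENNReal.ofReal (posPart' (c - h z) ^ r)) / volume (R.lower p γ) := by
  have hpos (x : ℝ) : ENNReal.ofReal (posPart' x) ^ r = ENNReal.ofReal (posPart' x ^ r) :=
    ENNReal.ofReal_rpow_of_nonneg (posPart'_nonneg x) hr
  have hupper : ∫⁻ z in R.upper p γ, oscDeviation h c R z ^ r =
      ∫⁻ z in R.upper p γ, ENNReal.ofReal (posPart' (h z - c) ^ r) :=
    setLIntegral_congr_fun (R.measurableSet_upper p γ) fun z hz => by
      rw [oscDeviation, if_pos (R.lt_snd_of_mem_upper hγ hz), hpos]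
  have hlower : ∫⁻ z in R.lower p γ, oscDeviation h c R z ^ r =
      ∫⁻ z in R.lower p γ, ENNReal.ofReal (posPart' (c - h z) ^ r) :=
    setLIntegral_congr_fun (R.measurableSet_lower p γ) fun z hz => by
      rw [oscDeviation, if_neg (R.snd_lt_of_mem_lower hγ hz).not_gt, hpos]
  rw [ParRect.oscMeasure, lintegral_add_measure, lintegral_smul_measure, lintegral_smul_measure,
    hupper, hlower, ENNReal.div_eq_inv_mul, ENNReal.div_eq_inv_mul, smul_eq_mul, smul_eq_mul]

theorem osc_eq_iInf_lintegral {p γ r : ℝ} (hγ : 0 ≤ γ) (hr : 0 ≤ r)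
    (h : (Fin n → ℝ) × ℝ → ℝ) (R : ParRect n) :
    osc p γ r h R = ⨅ c, ∫⁻ z, oscDeviation h c R z ^ r ∂(R.oscMeasure p γ) := by
  simp only [lintegral_oscDeviation_rpow hγ hr, osc]

theorem oscDeviation_le_add (op : ℝ → ℝ → ℝ)
    (hop : ∀ a b c d, posPart' (op a b - op c d) ≤ posPart' (a - c) + posPart' (b - d))
    (f g : (Fin n → ℝ) × ℝ → ℝ) (c d : ℝ) (R : ParRect n) (z : (Fin n → ℝ) × ℝ) :
    oscDeviation (fun z => op (f z) (g z)) (op c d) R z ≤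
      oscDeviation f c R z + oscDeviation g d R z := by
  simp only [oscDeviation]
  rw [← ENNReal.ofReal_add (posPart'_nonneg _) (posPart'_nonneg _)]
  split_ifs <;> exact ENNReal.ofReal_le_ofReal (hop ..)

theorem osc_rpow_inv_le_add {p γ r : ℝ} (hγ : 0 ≤ γ) (hr : 1 ≤ r) (op : ℝ → ℝ → ℝ)
    (hop : ∀ a b c d, posPart' (op a b - op c d) ≤ posPart' (a - c) + posPart' (b - d))
    {f g : (Fin n → ℝ) × ℝ → ℝ} (hf : Measurable f) (hg : Measurable g) (R : ParRect n) :
    osc p γ r (fun z => op (f z) (g z)) R ^ (1 / r) ≤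
      osc p γ r f R ^ (1 / r) + osc p γ r g R ^ (1 / r) := by
  have hr₀ : 0 < r := zero_lt_one.trans_le hr
  simp only [osc_eq_iInf_lintegral hγ hr₀.le, ENNReal.iInf_rpow _ (one_div_pos.2 hr₀),
    ENNReal.iInf_add, ENNReal.add_iInf]
  refine le_iInf₂ fun d c => iInf_le_of_le (op c d) ?_
  calc (∫⁻ z, oscDeviation (fun z => op (f z) (g z)) (op c d) R z ^ r
          ∂(R.oscMeasure p γ)) ^ (1 / r)
      _ ≤ (∫⁻ z, (oscDeviation f c R + oscDeviation g d R) z ^ r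
          ∂(R.oscMeasure p γ)) ^ (1 / r) := by
        gcongr with z
        exact oscDeviation_le_add op hop f g c d R z
      _ ≤ _ := ENNReal.lintegral_Lp_add_le (measurable_oscDeviation hf c R).aemeasurable
        (measurable_oscDeviation hg d R).aemeasurable hr

theorem volume_mul_osc_rpow_eq {p γ q r : ℝ} (hq : 0 < q) (h : (Fin n → ℝ) × ℝ → ℝ)
    (R : ParRect n) :
    volume (R.upper p γ) * osc p γ r h R ^ (q / r) =
      (volume (R.upper p γ) ^ (1 / q) * osc p γ r h R ^ (1 / r)) ^ q := by
  rw [ENNReal.mul_rpow_of_nonneg _ _ hq.le, ← ENNReal.rpow_mul, ← ENNReal.rpow_mul,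
    one_div_mul_cancel hq.ne', ENNReal.rpow_one, one_div_mul_eq_div]

theorem tsum_le_pjnQ (p q γ r : ℝ) (h : (Fin n → ℝ) × ℝ → ℝ) {Ω : Set ((Fin n → ℝ) × ℝ)}
    {Rs : ℕ → ParRect n} (hsub : ∀ i, (Rs i).rect p ⊆ Ω)
    (hdisj : Pairwise fun i j => Disjoint ((Rs i).rect p) ((Rs j).rect p)) :
    ∑' i, volume ((Rs i).upper p γ) * osc p γ r h (Rs i) ^ (q / r) ≤ pjnQ p q γ r h Ω :=
  le_iSup_of_le Rs <| le_iSup_of_le hsub <| le_iSup_of_le hdisj le_rfl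

theorem pjn_le_add_of_osc_rpow_inv_le {p q γ r : ℝ} (hq : 1 ≤ q)
    {f g h : (Fin n → ℝ) × ℝ → ℝ} (Ω : Set ((Fin n → ℝ) × ℝ))
    (hosc : ∀ R : ParRect n,
      osc p γ r h R ^ (1 / r) ≤ osc p γ r f R ^ (1 / r) + osc p γ r g R ^ (1 / r)) :
    pjn p q γ r h Ω ≤ pjn p q γ r f Ω + pjn p q γ r g Ω := by
  have hq₀ : 0 < q := zero_lt_one.trans_le hq
  rw [pjn, one_div, ENNReal.rpow_inv_le_iff hq₀, pjnQ]
  refine iSup_le fun Rs => iSup_le fun hsub => iSup_le fun hdisj => ?_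
  rw [← ENNReal.rpow_inv_le_iff hq₀, ← one_div]
  set w : ((Fin n → ℝ) × ℝ → ℝ) → ℕ → ℝ≥0∞ := fun k i =>
    volume ((Rs i).upper p γ) ^ (1 / q) * osc p γ r k (Rs i) ^ (1 / r)
  have hnorm (k : (Fin n → ℝ) × ℝ → ℝ) : (∑' i, w k i ^ q) ^ (1 / q) ≤ pjn p q γ r k Ω := by
    simp only [w, ← volume_mul_osc_rpow_eq hq₀]
    exact ENNReal.rpow_le_rpow (tsum_le_pjnQ p q γ r k hsub hdisj) (by positivity)
  calc (∑' i, volume ((Rs i).upper p γ) * osc p γ r h (Rs i) ^ (q / r)) ^ (1 / q)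
      = (∑' i, w h i ^ q) ^ (1 / q) := by simp only [w, volume_mul_osc_rpow_eq hq₀]
    _ ≤ (∑' i, (w f i + w g i) ^ q) ^ (1 / q) := by
        gcongr with i
        simpa only [w, mul_add] using mul_le_mul_right (hosc (Rs i)) _
    _ ≤ (∑' i, w f i ^ q) ^ (1 / q) + (∑' i, w g i ^ q) ^ (1 / q) :=
        ENNReal.tsum_rpow_add_le _ _ hq
    _ ≤ pjn p q γ r f Ω + pjn p q γ r g Ω := add_le_add (hnorm f) (hnorm g)

theorem pjn_max_min_general (n : ℕ) (p q γ r : ℝ) (hγ0 : 0 ≤ γ)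
    (hq : 1 < q) (hr1 : 1 ≤ r)
    (Ω : Set (Fin n → ℝ)) (T : ℝ)
    (f g : (Fin n → ℝ) × ℝ → ℝ) (hf : Measurable f) (hg : Measurable g) :
    pjn p q γ r (fun z => max (f z) (g z)) (Ω ×ˢ Ioo (0 : ℝ) T) ≤
      pjn p q γ r f (Ω ×ˢ Ioo (0 : ℝ) T) + pjn p q γ r g (Ω ×ˢ Ioo (0 : ℝ) T) ∧
    pjn p q γ r (fun z => min (f z) (g z)) (Ω ×ˢ Ioo (0 : ℝ) T) ≤
      pjn p q γ r f (Ω ×ˢ Ioo (0 : ℝ) T) + pjn p q γ r g (Ω ×ˢ Ioo (0 : ℝ) T) :=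
  ⟨pjn_le_add_of_osc_rpow_inv_le hq.le _
      (osc_rpow_inv_le_add hγ0 hr1 max posPart'_max_sub_max_le hf hg),
    pjn_le_add_of_osc_rpow_inv_le hq.le _
      (osc_rpow_inv_le_add hγ0 hr1 min posPart'_min_sub_min_le hf hg)⟩

/-- For `1 ≤ r < q`, the `PJN⁺_{q,γ,r}` norms of `max{f,g}` and `min{f,g}` are bounded by
`‖f‖ + ‖g‖`. -/
theorem pjn_max_min (n : ℕ) (p q γ r : ℝ) (hp : 1 < p) (hγ0 : 0 ≤ γ) (hγ1 : γ < 1)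
    (hq : 1 < q) (hr1 : 1 ≤ r) (hrq : r < q)
    (Ω : Set (Fin n → ℝ)) (T : ℝ) (hT : 0 < T)
    (f g : (Fin n → ℝ) × ℝ → ℝ) (hf : Measurable f) (hg : Measurable g)
    (hfin : pjn p q γ r f (Ω ×ˢ Ioo (0 : ℝ) T) < ⊤)
    (hgin : pjn p q γ r g (Ω ×ˢ Ioo (0 : ℝ) T) < ⊤) :
    pjn p q γ r (fun z => max (f z) (g z)) (Ω ×ˢ Ioo (0 : ℝ) T) ≤
      pjn p q γ r f (Ω ×ˢ Ioo (0 : ℝ) T) + pjn p q γ r g (Ω ×ˢ Ioo (0 : ℝ) T) ∧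
    pjn p q γ r (fun z => min (f z) (g z)) (Ω ×ˢ Ioo (0 : ℝ) T) ≤
      pjn p q γ r f (Ω ×ˢ Ioo (0 : ℝ) T) + pjn p q γ r g (Ω ×ˢ Ioo (0 : ℝ) T) :=
  pjn_max_min_general n p q γ r hγ0 hq hr1 Ω T f g hf hg

end
end
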